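/- arXiv:1705.00784 — 9 statements merged into one kernel-verified Lean document; each statement's English description precedes it below -/
import Mathlib

section
/- Let 𝒟 be an upper semicontinuous decomposition of a Hausdorff space M, and let π : M → M/𝒟 be the natural quotient map. Then π is a proper map; that is, a subset C of M/𝒟 is compact if and only if π⁻¹(C) is compact. -/
/-- A decomposition of a space `M`: a partition of `M` into nonempty subsets. -/
def IsDecomposition {M : Type*} (𝒟 : Set (Set M)) : Prop :=
  (∀ D ∈ 𝒟, D.Nonempty) ∧ ∀ x : M, ∃! D, D ∈ 𝒟 ∧ x ∈ D

/-- A decomposition of a Hausdorff space is upper semicontinuous if each member is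
compact and, for each member `D` and open `U ⊇ D`, there is an open `V ⊇ D` such that
every member meeting `V` is contained in `U`. -/
def IsUSCDecomposition {M : Type*} [TopologicalSpace M] (𝒟 : Set (Set M)) : Prop :=
  (∀ D ∈ 𝒟, IsCompact D) ∧
    ∀ D ∈ 𝒟, ∀ U : Set M, IsOpen U → D ⊆ U →
      ∃ V : Set M, IsOpen V ∧ D ⊆ V ∧ ∀ D' ∈ 𝒟, (D' ∩ V).Nonempty → D' ⊆ U

/-- The natural quotient map of an upper semicontinuous decomposition of a Hausdorff
space is proper: a set in the quotient is compact iff its preimage is compact.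
Here the quotient `M/𝒟` is represented by a topological quotient map `π : M → N`
whose fibers are exactly the members of `𝒟`. -/
theorem usc_quotient_proper {M N : Type*} [TopologicalSpace M] [T2Space M]
    [TopologicalSpace N]
    (𝒟 : Set (Set M)) (hpart : IsDecomposition 𝒟) (husc : IsUSCDecomposition 𝒟)
    (π : M → N) (hq : Topology.IsQuotientMap π)
    (hfib : ∀ D : Set M, D ∈ 𝒟 ↔ ∃ y : N, D = π ⁻¹' {y}) :
    ∀ C : Set N, IsCompact C ↔ IsCompact (π ⁻¹' C) := by
  classical
  have hsurj : Function.Surjective π := by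
    intro y
    obtain ⟨x, hx⟩ := hpart.1 _ ((hfib _).2 ⟨y, rfl⟩)
    exact ⟨x, hx⟩
  -- key openness lemma: the "inner saturation" of an open set is open
  have hopen : ∀ U : Set M, IsOpen U → IsOpen {x : M | π ⁻¹' {π x} ⊆ U} := by
    intro U hU
    rw [isOpen_iff_forall_mem_open]
    intro x hx
    have hDmem : π ⁻¹' {π x} ∈ 𝒟 := (hfib _).2 ⟨π x, rfl⟩
    obtain ⟨V, hVopen, hDV, hV⟩ := husc.2 _ hDmem U hU hx
    refine ⟨V, ?_, hVopen, hDV rfl⟩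
    intro x' hx'
    exact hV _ ((hfib _).2 ⟨π x', rfl⟩) ⟨x', rfl, hx'⟩
  intro C
  constructor
  · intro hC
    rw [isCompact_iff_finite_subcover]
    intro ι U hUopen hcover
    have key : ∀ y ∈ C, ∃ t : Finset ι, π ⁻¹' {y} ⊆ ⋃ i ∈ t, U i := by
      intro y hy
      refine (husc.1 _ ((hfib _).2 ⟨y, rfl⟩)).elim_finite_subcover U hUopen ?_
      intro x hx
      have hxy : π x = y := hx
      refine hcover ?_
      rw [Set.mem_preimage, hxy]
      exact hy
    choose! t ht using key
    set T : N → Set N := fun y => {n | π ⁻¹' {n} ⊆ ⋃ i ∈ t y, U i} with hT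
    have hTopen : ∀ y, IsOpen (T y) := by
      intro y
      rw [← hq.isOpen_preimage]
      exact hopen _ (isOpen_biUnion fun i _ => hUopen i)
    have hCcover : C ⊆ ⋃ y ∈ C, T y := fun y hy => Set.mem_biUnion hy (ht y hy)
    obtain ⟨s, hsC, hsfin, hscover⟩ :=
      hC.elim_finite_subcover_image (fun y _ => hTopen y) hCcover
    refine ⟨hsfin.toFinset.biUnion t, ?_⟩
    intro x hx
    have := hscover hx
    simp only [Set.mem_iUnion] at this
    obtain ⟨y, hy, hTy⟩ := this
    have hxU : x ∈ ⋃ i ∈ t y, U i := hTy rfl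
    simp only [Set.mem_iUnion] at hxU ⊢
    obtain ⟨i, hi, hxi⟩ := hxU
    exact ⟨i, Finset.mem_biUnion.2 ⟨y, hsfin.mem_toFinset.2 hy, hi⟩, hxi⟩
  · intro hK
    have hCim : C = π '' (π ⁻¹' C) := (Set.image_preimage_eq C hsurj).symm
    rw [hCim]
    exact hK.image hq.continuous
end

section
/- Let 𝒟 be an upper semicontinuous decomposition of a Hausdorff space M such that each member of 𝒟 is connected, and let π : M → M/𝒟 be the natural quotient map. Then a subset C of M/𝒟 is connected if and only if π⁻¹(C) is connected. -/
/-- For an upper semicontinuous decomposition into connected members of a Hausdorff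
space, a subset of the quotient is connected iff its preimage is connected.
Here the quotient `M/𝒟` is represented by a topological quotient map `π : M → N`
whose fibers are exactly the members of `𝒟`. -/
theorem usc_quotient_connected {M N : Type*} [TopologicalSpace M] [T2Space M]
    [TopologicalSpace N]
    (𝒟 : Set (Set M)) (hpart : IsDecomposition 𝒟) (husc : IsUSCDecomposition 𝒟)
    (hconn : ∀ D ∈ 𝒟, IsConnected D)
    (π : M → N) (hq : Topology.IsQuotientMap π)
    (hfib : ∀ D : Set M, D ∈ 𝒟 ↔ ∃ y : N, D = π ⁻¹' {y}) :
    ∀ C : Set N, IsConnected C ↔ IsConnected (π ⁻¹' C) := by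
  -- Every fiber is a member of the decomposition, hence nonempty and connected.
  have hfib' : ∀ y : N, π ⁻¹' {y} ∈ 𝒟 := fun y => (hfib _).mpr ⟨y, rfl⟩
  have hfibne : ∀ y : N, (π ⁻¹' {y}).Nonempty := fun y => hpart.1 _ (hfib' y)
  have hfibconn : ∀ y : N, IsConnected (π ⁻¹' {y}) := fun y => hconn _ (hfib' y)
  have hsurj : Function.Surjective π := fun y => by
    obtain ⟨x, hx⟩ := hfibne y; exact ⟨x, hx⟩
  -- π is a closed map.
  have hclosed : IsClosedMap π := by
    intro F hF
    rw [← isOpen_compl_iff, ← hq.isOpen_preimage]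
    rw [isOpen_iff_forall_mem_open]
    intro x hx
    simp only [Set.mem_preimage, Set.mem_compl_iff, Set.mem_image, not_exists] at hx
    have hDsub : π ⁻¹' {π x} ⊆ Fᶜ := by
      intro z hz
      intro hzF
      exact hx z ⟨hzF, hz⟩
    obtain ⟨V, hVopen, hDV, hV⟩ :=
      husc.2 _ (hfib' (π x)) Fᶜ hF.isOpen_compl hDsub
    refine ⟨V, ?_, hVopen, hDV rfl⟩
    intro z hz
    have hsub : π ⁻¹' {π z} ⊆ Fᶜ := hV _ (hfib' (π z)) ⟨z, rfl, hz⟩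
    simp only [Set.mem_preimage, Set.mem_compl_iff, Set.mem_image, not_exists]
    rintro w ⟨hwF, hwz⟩
    exact hsub (show π w ∈ ({π z} : Set N) from hwz) hwF
  intro C
  constructor
  · rintro ⟨⟨y, hy⟩, hC⟩
    have hne : (π ⁻¹' C).Nonempty := by
      obtain ⟨x, hx⟩ := hfibne y
      exact ⟨x, by simpa using hx ▸ hy⟩
    refine ⟨hne, ?_⟩
    intro u v hu hv hcov ⟨a, haC, hau⟩ ⟨b, hbC, hbv⟩
    by_contra hempty
    rw [Set.not_nonempty_iff_eq_empty] at hempty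
    -- each fiber over C is contained in u or in v
    have hdicho : ∀ z : N, z ∈ C → π ⁻¹' {z} ⊆ u ∨ π ⁻¹' {z} ⊆ v := by
      intro z hz
      have hsubC : π ⁻¹' {z} ⊆ π ⁻¹' C := fun w hw => by
        simp only [Set.mem_preimage, Set.mem_singleton_iff] at hw
        simp [hw, hz]
      by_contra h
      push_neg at h
      obtain ⟨h1, h2⟩ := h
      rw [Set.not_subset] at h1 h2
      obtain ⟨p, hp, hpu⟩ := h1
      obtain ⟨r, hr, hrv⟩ := h2
      have hpv : p ∈ v := (hcov (hsubC hp)).resolve_left hpu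
      have hru : r ∈ u := (hcov (hsubC hr)).resolve_right hrv
      obtain ⟨w, hw1, hw2⟩ := (hfibconn z).2 u v hu hv
        (fun t ht => hcov (hsubC ht)) ⟨r, hr, hru⟩ ⟨p, hp, hpv⟩
      have : w ∈ π ⁻¹' C ∩ (u ∩ v) := ⟨hsubC hw1, hw2⟩
      rw [hempty] at this
      exact this
    -- the open sets downstairs
    set Wu : Set N := (π '' uᶜ)ᶜ with hWu
    set Wv : Set N := (π '' vᶜ)ᶜ with hWv
    have hWuo : IsOpen Wu := (hclosed _ hu.isClosed_compl).isOpen_compl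
    have hWvo : IsOpen Wv := (hclosed _ hv.isClosed_compl).isOpen_compl
    have hmemWu : ∀ z : N, π ⁻¹' {z} ⊆ u → z ∈ Wu := by
      intro z hsub
      simp only [hWu, Set.mem_compl_iff, Set.mem_image, not_exists]
      rintro w ⟨hwu, hwz⟩
      exact hwu (hsub (show π w ∈ ({z} : Set N) from hwz))
    have hmemWv : ∀ z : N, π ⁻¹' {z} ⊆ v → z ∈ Wv := by
      intro z hsub
      simp only [hWv, Set.mem_compl_iff, Set.mem_image, not_exists]
      rintro w ⟨hwv, hwz⟩
      exact hwv (hsub (show π w ∈ ({z} : Set N) from hwz))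
    have hcov' : C ⊆ Wu ∪ Wv := by
      intro z hz
      rcases hdicho z hz with h | h
      · exact Or.inl (hmemWu z h)
      · exact Or.inr (hmemWv z h)
    have hCu : (C ∩ Wu).Nonempty := by
      refine ⟨π a, haC, hmemWu _ ?_⟩
      rcases hdicho _ haC with h | h
      · exact h
      · exfalso
        have : a ∈ π ⁻¹' C ∩ (u ∩ v) := ⟨haC, hau, h rfl⟩
        rw [hempty] at this; exact this
    have hCv : (C ∩ Wv).Nonempty := by
      refine ⟨π b, hbC, hmemWv _ ?_⟩
      rcases hdicho _ hbC with h | h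
      · exfalso
        have : b ∈ π ⁻¹' C ∩ (u ∩ v) := ⟨hbC, h rfl, hbv⟩
        rw [hempty] at this; exact this
      · exact h
    obtain ⟨z, hzC, hzu, hzv⟩ := hC Wu Wv hWuo hWvo hcov' hCu hCv
    obtain ⟨x, hx⟩ := hfibne z
    have hxu : x ∈ u := by
      by_contra h
      exact hzu ⟨x, h, hx⟩
    have hxv : x ∈ v := by
      by_contra h
      exact hzv ⟨x, h, hx⟩
    have : x ∈ π ⁻¹' C ∩ (u ∩ v) := ⟨by simpa using hx ▸ hzC, hxu, hxv⟩
    rw [hempty] at this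
    exact this
  · intro h
    have := h.image π hq.continuous.continuousOn
    rwa [Set.image_preimage_eq C hsurj] at this
end

section
/- Let 𝒟 be an upper semicontinuous decomposition of a Hausdorff space M such that each member of 𝒟 is connected, let π : M → M/𝒟 be the natural quotient map, and let {x} be a singleton member of 𝒟. If M/𝒟 is locally connected at the point π(x), then M is locally connected at x. -/
/-- A space `X` is locally connected at a point `p` if every neighborhood of `p`
contains a connected open neighborhood of `p`. -/
def LocallyConnectedAt {X : Type*} [TopologicalSpace X] (p : X) : Prop :=
  ∀ U ∈ nhds p, ∃ V : Set X, IsOpen V ∧ p ∈ V ∧ IsConnected V ∧ V ⊆ U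

/-- If `𝒟` is an upper semicontinuous decomposition with connected members of a
Hausdorff space `M`, `{x}` is a singleton member of `𝒟`, and the quotient `M/𝒟` is
locally connected at `π x`, then `M` is locally connected at `x`.  Here the quotient
is represented by a topological quotient map `π : M → N` whose fibers are exactly the
members of `𝒟`. -/
theorem usc_quotient_pullback_locallyConnectedAt {M N : Type*}
    [TopologicalSpace M] [T2Space M] [TopologicalSpace N]
    (𝒟 : Set (Set M)) (hpart : IsDecomposition 𝒟) (husc : IsUSCDecomposition 𝒟)
    (hconn : ∀ D ∈ 𝒟, IsConnected D)
    (π : M → N) (hq : Topology.IsQuotientMap π)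
    (hfib : ∀ D : Set M, D ∈ 𝒟 ↔ ∃ y : N, D = π ⁻¹' {y})
    (x : M) (hx : ({x} : Set M) ∈ 𝒟)
    (hlc : LocallyConnectedAt (π x)) :
    LocallyConnectedAt x := by
  have hcont : Continuous π := hq.continuous
  have fib_mem : ∀ y : N, π ⁻¹' {y} ∈ 𝒟 := fun y => (hfib _).mpr ⟨y, rfl⟩
  have hxfib : π ⁻¹' {π x} = ({x} : Set M) := by
    obtain ⟨y, hy⟩ := (hfib _).mp hx
    have hxy : π x = y := by
      have : x ∈ π ⁻¹' {y} := by rw [← hy]; exact rfl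
      simpa using this
    rw [hxy, ← hy]
  intro U hU
  obtain ⟨U₀, hU₀U, hU₀open, hxU₀⟩ := mem_nhds_iff.mp hU
  obtain ⟨V, hVopen, hxV, hVprop⟩ :=
    husc.2 {x} hx U₀ hU₀open (Set.singleton_subset_iff.mpr hxU₀)
  set W : Set M := {z | π ⁻¹' {π z} ⊆ V} with hWdef
  have hWx : x ∈ W := by
    show π ⁻¹' {π x} ⊆ V
    rw [hxfib]
    exact Set.singleton_subset_iff.mpr (hxV rfl)
  have hWsat : π ⁻¹' (π '' W) = W := by
    ext z
    constructor
    · rintro ⟨z', hz', hzz'⟩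
      show π ⁻¹' {π z} ⊆ V
      rw [← hzz']
      exact hz'
    · intro hz
      exact ⟨z, hz, rfl⟩
  have hWU₀ : W ⊆ U₀ := fun z hz =>
    hVprop _ (fib_mem (π z)) ⟨z, rfl, hz rfl⟩ rfl
  have hWopen : IsOpen W := by
    rw [isOpen_iff_forall_mem_open]
    intro z hz
    obtain ⟨V', hV'open, hV'sub, hV'prop⟩ :=
      husc.2 (π ⁻¹' {π z}) (fib_mem (π z)) V hVopen hz
    refine ⟨V', fun w hw => ?_, hV'open, hV'sub rfl⟩
    exact hV'prop _ (fib_mem (π w)) ⟨w, rfl, hw⟩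
  have himopen : IsOpen (π '' W) := by
    rw [← hq.isOpen_preimage, hWsat]
    exact hWopen
  obtain ⟨C, hCopen, hxC, hCconn, hCsub⟩ :=
    hlc (π '' W) (himopen.mem_nhds ⟨x, hWx, rfl⟩)
  refine ⟨π ⁻¹' C, hCopen.preimage hcont, hxC, ?_, ?_⟩
  · -- connectedness of π ⁻¹' C
    have hsatC : ∀ z : M, π z ∈ C → π ⁻¹' {π z} ⊆ π ⁻¹' C := by
      intro z hz w hw
      have : π w = π z := hw
      show π w ∈ C
      rw [this]; exact hz
    refine ⟨⟨x, hxC⟩, ?_⟩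
    intro u v hu hv hsub hnu hnv
    by_contra hemp
    rw [Set.not_nonempty_iff_eq_empty] at hemp
    -- each fiber over a point of C lies entirely in u or entirely in v
    have hfib_side : ∀ z : M, π z ∈ C → z ∈ u → π ⁻¹' {π z} ⊆ u := by
      intro z hz hzu
      have hfC : π ⁻¹' {π z} ⊆ π ⁻¹' C := hsatC z hz
      have hfconn := hconn _ (fib_mem (π z))
      by_contra hns
      obtain ⟨w, hwf, hwu⟩ := Set.not_subset.mp hns
      have hwv : w ∈ v := Or.resolve_left (hsub (hfC hwf)) hwu
      have := hfconn.isPreconnected (u := u) (v := v) hu hv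
        (hfC.trans hsub) ⟨z, rfl, hzu⟩ ⟨w, hwf, hwv⟩
      obtain ⟨p, hpf, hpu, hpv⟩ := this
      have : p ∈ π ⁻¹' C ∩ (u ∩ v) := ⟨hfC hpf, hpu, hpv⟩
      rw [hemp] at this
      exact this
    have hfib_side' : ∀ z : M, π z ∈ C → z ∈ v → π ⁻¹' {π z} ⊆ v := by
      intro z hz hzv
      have hfC : π ⁻¹' {π z} ⊆ π ⁻¹' C := hsatC z hz
      have hfconn := hconn _ (fib_mem (π z))
      by_contra hns
      obtain ⟨w, hwf, hwv⟩ := Set.not_subset.mp hns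
      have hwu : w ∈ u := Or.resolve_right (hsub (hfC hwf)) hwv
      have := hfconn.isPreconnected (u := u) (v := v) hu hv
        (hfC.trans hsub) ⟨w, hwf, hwu⟩ ⟨z, rfl, hzv⟩
      obtain ⟨p, hpf, hpu, hpv⟩ := this
      have : p ∈ π ⁻¹' C ∩ (u ∩ v) := ⟨hfC hpf, hpu, hpv⟩
      rw [hemp] at this
      exact this
    -- the images of the two pieces
    have hAsat : π ⁻¹' (π '' (π ⁻¹' C ∩ u)) = π ⁻¹' C ∩ u := by
      ext z
      constructor
      · rintro ⟨z', ⟨hz'C, hz'u⟩, hzz'⟩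
        have hzC : π z ∈ C := by rw [← hzz']; exact hz'C
        have hzu : z ∈ u := by
          have := hfib_side z' hz'C hz'u
          rw [hzz'] at this
          exact this rfl
        exact ⟨hzC, hzu⟩
      · intro hz
        exact ⟨z, hz, rfl⟩
    have hBsat : π ⁻¹' (π '' (π ⁻¹' C ∩ v)) = π ⁻¹' C ∩ v := by
      ext z
      constructor
      · rintro ⟨z', ⟨hz'C, hz'v⟩, hzz'⟩
        have hzC : π z ∈ C := by rw [← hzz']; exact hz'C
        have hzv : z ∈ v := by
          have := hfib_side' z' hz'C hz'v
          rw [hzz'] at this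
          exact this rfl
        exact ⟨hzC, hzv⟩
      · intro hz
        exact ⟨z, hz, rfl⟩
    have hAopen : IsOpen (π '' (π ⁻¹' C ∩ u)) := by
      rw [← hq.isOpen_preimage, hAsat]
      exact (hCopen.preimage hcont).inter hu
    have hBopen : IsOpen (π '' (π ⁻¹' C ∩ v)) := by
      rw [← hq.isOpen_preimage, hBsat]
      exact (hCopen.preimage hcont).inter hv
    have hCcover : C ⊆ π '' (π ⁻¹' C ∩ u) ∪ π '' (π ⁻¹' C ∩ v) := by
      intro y hy
      obtain ⟨z, hz⟩ := hpart.1 _ (fib_mem y)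
      have hzy : π z = y := hz
      have hzC : z ∈ π ⁻¹' C := by show π z ∈ C; rw [hzy]; exact hy
      rcases hsub hzC with hzu | hzv
      · exact Or.inl ⟨z, ⟨hzC, hzu⟩, hzy⟩
      · exact Or.inr ⟨z, ⟨hzC, hzv⟩, hzy⟩
    obtain ⟨z₁, hz₁C, hz₁u⟩ := hnu
    obtain ⟨z₂, hz₂C, hz₂v⟩ := hnv
    have hCu : (C ∩ π '' (π ⁻¹' C ∩ u)).Nonempty :=
      ⟨π z₁, hz₁C, z₁, ⟨hz₁C, hz₁u⟩, rfl⟩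
    have hCv : (C ∩ π '' (π ⁻¹' C ∩ v)).Nonempty :=
      ⟨π z₂, hz₂C, z₂, ⟨hz₂C, hz₂v⟩, rfl⟩
    obtain ⟨y, hyC, ⟨w₁, ⟨hw₁C, hw₁u⟩, hw₁y⟩, ⟨w₂, ⟨hw₂C, hw₂v⟩, hw₂y⟩⟩ :=
      hCconn.isPreconnected _ _ hAopen hBopen hCcover hCu hCv
    have hw₂fib : w₂ ∈ π ⁻¹' {π w₁} := by
      show π w₂ ∈ ({π w₁} : Set N)
      rw [hw₂y, hw₁y]; rfl
    have hw₂u : w₂ ∈ u := hfib_side w₁ hw₁C hw₁u hw₂fib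
    have : w₂ ∈ π ⁻¹' C ∩ (u ∩ v) := ⟨hw₂C, hw₂u, hw₂v⟩
    rw [hemp] at this
    exact this
  · -- π ⁻¹' C ⊆ U
    intro z hz
    have : z ∈ π ⁻¹' (π '' W) := hCsub hz
    rw [hWsat] at this
    exact hU₀U (hWU₀ this)
end

section
/- Let M be a compact metrizable topological space and let 𝒟 be an upper semicontinuous decomposition of M. Then the quotient space M/𝒟 is metrizable. -/
/-- If `M` is a compact metrizable space and `𝒟` is an upper semicontinuous
decomposition of `M`, then the quotient `M/𝒟` is metrizable.  Here the quotient is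
represented by a topological quotient map `π : M → N` whose fibers are exactly the
members of `𝒟`. -/
theorem usc_quotient_metrizable {M N : Type*} [TopologicalSpace M]
    [CompactSpace M] [TopologicalSpace.MetrizableSpace M] [TopologicalSpace N]
    (𝒟 : Set (Set M)) (hpart : IsDecomposition 𝒟) (husc : IsUSCDecomposition 𝒟)
    (π : M → N) (hq : Topology.IsQuotientMap π)
    (hfib : ∀ D : Set M, D ∈ 𝒟 ↔ ∃ y : N, D = π ⁻¹' {y}) :
    TopologicalSpace.MetrizableSpace N := by
  letI := TopologicalSpace.metrizableSpaceMetric M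
  have hsurj : Function.Surjective π := hq.surjective
  have hcont : Continuous π := hq.continuous
  have hfib' : ∀ y : N, π ⁻¹' {y} ∈ 𝒟 := fun y => (hfib _).2 ⟨y, rfl⟩
  -- π is a closed map
  have hclosed : IsClosedMap π := by
    intro C hC
    rw [← isOpen_compl_iff, ← hq.isOpen_preimage]
    rw [isOpen_iff_mem_nhds]
    intro x hx
    simp only [Set.mem_preimage, Set.mem_compl_iff, Set.mem_image] at hx
    have hsub : π ⁻¹' {π x} ⊆ Cᶜ := by
      intro z hz
      intro hzC
      exact hx ⟨z, hzC, hz⟩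
    obtain ⟨V, hVopen, hDV, hV⟩ :=
      husc.2 _ (hfib' (π x)) Cᶜ hC.isOpen_compl hsub
    have hxV : x ∈ V := hDV rfl
    refine Filter.mem_of_superset (hVopen.mem_nhds hxV) ?_
    intro z hz
    have hz' : π ⁻¹' {π z} ⊆ Cᶜ :=
      hV _ (hfib' (π z)) ⟨z, rfl, hz⟩
    simp only [Set.mem_preimage, Set.mem_compl_iff, Set.mem_image]
    rintro ⟨c, hcC, hcz⟩
    exact hz' hcz hcC
  -- N is compact
  haveI : CompactSpace N :=
    ⟨by rw [← Set.image_univ_of_surjective hsurj]; exact isCompact_univ.image hcont⟩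
  -- N is Hausdorff
  haveI : T2Space N := by
    constructor
    intro a b hab
    have hdisj : Disjoint (π ⁻¹' {a}) (π ⁻¹' {b}) := by
      rw [Set.disjoint_left]
      intro z hza hzb
      exact hab (hza.symm.trans hzb)
    obtain ⟨U1, U2, hU1, hU2, hDa, hDb, hUdisj⟩ :=
      SeparatedNhds.of_isCompact_isCompact
        (husc.1 _ (hfib' a)) (husc.1 _ (hfib' b)) hdisj
    refine ⟨(π '' U1ᶜ)ᶜ, (π '' U2ᶜ)ᶜ,
      (hclosed _ hU1.isClosed_compl).isOpen_compl,
      (hclosed _ hU2.isClosed_compl).isOpen_compl, ?_, ?_, ?_⟩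
    · rintro ⟨z, hz, hza⟩
      exact hz (hDa hza)
    · rintro ⟨z, hz, hzb⟩
      exact hz (hDb hzb)
    · rw [Set.disjoint_left]
      rintro y hy1 hy2
      obtain ⟨x, rfl⟩ := hsurj y
      have hx1 : x ∈ U1 := by
        by_contra h
        exact hy1 ⟨x, h, rfl⟩
      have hx2 : x ∈ U2 := by
        by_contra h
        exact hy2 ⟨x, h, rfl⟩
      exact Set.disjoint_left.1 hUdisj hx1 hx2
  -- N is second countable
  haveI : SecondCountableTopology N := by
    obtain ⟨B, hBcount, -, hBbasis⟩ :=
      TopologicalSpace.exists_countable_basis M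
    set F : Set (Set M) → Set N := fun S => (π '' (⋃₀ S)ᶜ)ᶜ with hF
    refine TopologicalSpace.IsTopologicalBasis.secondCountableTopology
      (b := F '' {S | S ⊆ B ∧ S.Finite}) ?_
      (((Set.countable_setOf_finite_subset hBcount).mono
        (fun S hS => And.intro hS.2 hS.1)).image F)
    refine TopologicalSpace.isTopologicalBasis_of_isOpen_of_nhds ?_ ?_
    · rintro _ ⟨S, ⟨hSB, hSfin⟩, rfl⟩
      have hopen : IsOpen (⋃₀ S) :=
        isOpen_sUnion fun t ht => hBbasis.isOpen (hSB ht)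
      exact (hclosed _ hopen.isClosed_compl).isOpen_compl
    · intro y W hyW hW
      have hfibW : π ⁻¹' {y} ⊆ π ⁻¹' W := by
        intro z hz
        simp only [Set.mem_preimage, Set.mem_singleton_iff] at hz
        simp [Set.mem_preimage, hz, hyW]
      have hcov : ∀ x ∈ π ⁻¹' {y}, ∃ b ∈ B, x ∈ b ∧ b ⊆ π ⁻¹' W := by
        intro x hx
        obtain ⟨b, hbB, hxb, hbW⟩ :=
          hBbasis.exists_subset_of_mem_open (hfibW hx) (hW.preimage hcont)
        exact ⟨b, hbB, hxb, hbW⟩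
      choose! f hfB hxf hfW using hcov
      obtain ⟨t, hcover⟩ :=
        (husc.1 _ (hfib' y)).elim_nhds_subcover' (fun x hx => f x)
          (fun x hx => ((hBbasis.isOpen (hfB x hx)).mem_nhds (hxf x hx)))
      refine ⟨F (Set.range fun x : t => f x.1.1), ⟨Set.range fun x : t => f x.1.1,
        ⟨?_, Set.finite_range _⟩, rfl⟩, ?_, ?_⟩
      · rintro _ ⟨x, rfl⟩
        exact hfB x.1.1 x.1.2
      · intro hmem
        obtain ⟨z, hz, hzy⟩ := hmem
        apply hz
        have hzmem : z ∈ π ⁻¹' {y} := hzy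
        obtain ⟨x, hxt, hzx⟩ := Set.mem_iUnion₂.1 (hcover hzmem)
        exact Set.mem_sUnion.2 ⟨f x.1, ⟨⟨x, hxt⟩, rfl⟩, hzx⟩
      · intro z hz
        obtain ⟨x, rfl⟩ := hsurj z
        have hx : x ∈ ⋃₀ Set.range fun x : t => f x.1.1 := by
          by_contra h
          exact hz ⟨x, h, rfl⟩
        obtain ⟨s', ⟨w, rfl⟩, hxw⟩ := hx
        exact hfW w.1.1 w.1.2 hxw
  infer_instance
end

section
/- Let M be a compact topological space and let d and d' be two metrics on M that both induce the topology of M. If a collection 𝒜 of subsets of M is a null family with respect to the metric d, then 𝒜 is a null family with respect to the metric d'. In other words, for a collection of subsets of a compact metrizable space, being a null family does not depend on the choice of compatible metric. -/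
/-!
On a compact space the identity map from `(M, d)` to `(M, d')` is uniformly continuous, and a
uniformly continuous map sends a null family of bounded sets to a null family: all but finitely
many members have `d`-diameter below the modulus `δ` that the map attaches to `ε`.
-/

open Bornology Metric Set

section

variable {α β : Type*} [PseudoMetricSpace α] [PseudoMetricSpace β]

def IsNullFamily (𝒜 : Set (Set α)) : Prop :=
  ∀ ε : ℝ, 0 < ε → {A ∈ 𝒜 | ε < diam A}.Finite

theorem UniformContinuous.exists_forall_diam_image_le {f : α → β} (hf : UniformContinuous f)
    {ε : ℝ} (hε : 0 < ε) :
    ∃ δ > 0, ∀ A : Set α, IsBounded A → diam A < δ → diam (f '' A) ≤ ε := by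
  obtain ⟨δ, hδ, hδε⟩ := Metric.uniformContinuous_iff.mp hf ε hε
  refine ⟨δ, hδ, fun A hA hAδ => diam_le_of_forall_dist_le hε.le ?_⟩
  rintro _ ⟨x, hx, rfl⟩ _ ⟨y, hy, rfl⟩
  exact (hδε ((dist_le_diam_of_mem hA hx hy).trans_lt hAδ)).le

theorem IsNullFamily.image {f : α → β} (hf : UniformContinuous f) {𝒜 : Set (Set α)}
    (h𝒜 : IsNullFamily 𝒜) (hbdd : ∀ A ∈ 𝒜, IsBounded A) : IsNullFamily (Set.image f '' 𝒜) := by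
  intro ε hε
  obtain ⟨δ, hδ, hsmall⟩ := hf.exists_forall_diam_image_le hε
  refine ((h𝒜 (δ / 2) (half_pos hδ)).image (Set.image f)).subset ?_
  rintro _ ⟨⟨A, hA, rfl⟩, hεA⟩
  refine ⟨A, ⟨hA, ?_⟩, rfl⟩
  by_contra! hAδ
  exact (hsmall A (hbdd A hA) (hAδ.trans_lt (half_lt_self hδ))).not_gt hεA

end

/-- For a collection of subsets of a compact space, being a null family (for each
`ε > 0`, only finitely many members have diameter greater than `ε`) does not depend on
the choice of metric compatible with the topology. -/
theorem nullFamily_independent_of_metric {M : Type*} [t : TopologicalSpace M]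
    [CompactSpace M] (m₁ m₂ : MetricSpace M)
    (h₁ : m₁.toUniformSpace.toTopologicalSpace = t)
    (h₂ : m₂.toUniformSpace.toTopologicalSpace = t)
    (𝒜 : Set (Set M))
    (hnull : ∀ ε : ℝ, 0 < ε →
      {A ∈ 𝒜 | ε < @Metric.diam M m₁.toPseudoMetricSpace A}.Finite) :
    ∀ ε : ℝ, 0 < ε →
      {A ∈ 𝒜 | ε < @Metric.diam M m₂.toPseudoMetricSpace A}.Finite := by
  subst h₁
  have hid : @UniformContinuous M M m₁.toUniformSpace m₂.toUniformSpace id :=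
    @CompactSpace.uniformContinuous_of_continuous M M m₁.toUniformSpace m₂.toUniformSpace _ id
      (h₂ ▸ @continuous_id M m₁.toUniformSpace.toTopologicalSpace)
  have himage := @IsNullFamily.image M M m₁.toPseudoMetricSpace m₂.toPseudoMetricSpace id hid 𝒜
    hnull fun A _ => @isBounded_of_compactSpace M A m₁.toPseudoMetricSpace _
  rwa [image_id_eq, Set.image_id] at himage
end

section
/- Let 𝒜 be a null family of compact subsets of a metric space M, and suppose q ∈ M is a point not contained in any member of 𝒜. Then each neighborhood U of q contains a smaller neighborhood V of q such that every A ∈ 𝒜 that intersects V is contained in U. -/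
/-- Let `𝒜` be a null family of compact subsets of a metric space `M` (for each
`ε > 0`, only finitely many members of `𝒜` have diameter greater than `ε`), and let
`q ∈ M` be a point not contained in any member of `𝒜`.  Then each neighborhood `U` of
`q` contains a neighborhood `V` of `q` such that every `A ∈ 𝒜` intersecting `V` is
contained in `U`. -/
theorem nullFamily_almost_usc {M : Type*} [MetricSpace M] (𝒜 : Set (Set M))
    (hcpt : ∀ A ∈ 𝒜, IsCompact A)
    (hnull : ∀ ε : ℝ, 0 < ε → {A ∈ 𝒜 | ε < Metric.diam A}.Finite)
    (q : M) (hq : ∀ A ∈ 𝒜, q ∉ A) :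
    ∀ U ∈ nhds q, ∃ V ∈ nhds q, V ⊆ U ∧ ∀ A ∈ 𝒜, (A ∩ V).Nonempty → A ⊆ U := by
  intro U hU
  obtain ⟨ε, hε, hball⟩ := Metric.mem_nhds_iff.mp hU
  have hε3 : 0 < ε / 3 := by linarith
  have hF : {A ∈ 𝒜 | ε / 3 < Metric.diam A}.Finite := hnull _ hε3
  -- for each large A, q is at positive distance
  have hpos : ∀ A ∈ hF.toFinset, 0 < Metric.infDist q A := by
    intro A hA
    rw [hF.mem_toFinset] at hA
    obtain ⟨hA𝒜, hdiam⟩ := hA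
    have hne : A.Nonempty := by
      rcases A.eq_empty_or_nonempty with h | h
      · simp [h, Metric.diam_empty] at hdiam; linarith
      · exact h
    exact (hcpt A hA𝒜).isClosed.notMem_iff_infDist_pos hne |>.mp (hq A hA𝒜)
  set s := hF.toFinset.image (fun A => Metric.infDist q A) with hs
  have hδ' : ∃ δ, 0 < δ ∧ δ ≤ ε / 3 ∧ ∀ A ∈ hF.toFinset, δ ≤ Metric.infDist q A := by
    rcases hF.toFinset.eq_empty_or_nonempty with h | h
    · exact ⟨ε / 3, hε3, le_refl _, by simp [h]⟩
    · obtain ⟨A₀, hA₀, hmin⟩ := hF.toFinset.exists_min_image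
        (fun A => Metric.infDist q A) h
      refine ⟨min (ε / 3) (Metric.infDist q A₀), lt_min hε3 (hpos _ hA₀),
        min_le_left _ _, fun A hA => le_trans (min_le_right _ _) (hmin A hA)⟩
  obtain ⟨δ, hδ, hδε, hδmin⟩ := hδ'
  refine ⟨Metric.ball q δ, Metric.ball_mem_nhds q hδ,
    fun x hx => hball (Metric.ball_subset_ball (by linarith) hx), ?_⟩
  intro A hA𝒜 ⟨x, hxA, hxV⟩
  have hAsmall : Metric.diam A ≤ ε / 3 := by
    by_contra h
    push_neg at h
    have hmem : A ∈ hF.toFinset := hF.mem_toFinset.mpr ⟨hA𝒜, h⟩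
    have := hδmin A hmem
    have hinf : Metric.infDist q A ≤ dist q x := Metric.infDist_le_dist_of_mem hxA
    rw [Metric.mem_ball, dist_comm] at hxV
    linarith
  intro y hyA
  apply hball
  rw [Metric.mem_ball]
  have h1 : dist y x ≤ Metric.diam A := Metric.dist_le_diam_of_mem
    ((hcpt A hA𝒜).isBounded) hyA hxA
  have h2 : dist x q < δ := Metric.mem_ball.mp hxV
  calc dist y q ≤ dist y x + dist x q := dist_triangle _ _ _
    _ < ε := by linarith
end

section
/- Suppose a group G acts cocompactly and isometrically on a metric space X. Let 𝒜 be a family of nonempty closed subspaces of X that is G-equivariant (for every g ∈ G and A ∈ 𝒜, the translate g·A lies in 𝒜) and locally finite (each compact subset of X intersects only finitely many members of 𝒜). Then: (1) for each A ∈ 𝒜, the stabilizer H = {g ∈ G : g·A = A} acts cocompactly on A, i.e., there is a compact set C ⊆ A whose H-translates cover A; and (2) the members of 𝒜 lie in only finitely many G-orbits. -/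
open Pointwise

/-- Pigeonhole principle for cocompact actions: if a group `G` acts cocompactly and
isometrically on a metric space `X`, and `𝒜` is a `G`-equivariant, locally finite
family of nonempty closed subspaces of `X`, then (1) the stabilizer of each `A ∈ 𝒜`
acts cocompactly on `A`, and (2) the members of `𝒜` lie in finitely many `G`-orbits. -/
theorem pigeonhole_cocompact {G X : Type*} [Group G] [MetricSpace X] [MulAction G X]
    (hiso : ∀ g : G, Isometry (fun x : X => g • x))
    (hcocpt : ∃ K : Set X, IsCompact K ∧ ⋃ g : G, g • K = Set.univ)
    (𝒜 : Set (Set X))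
    (hne : ∀ A ∈ 𝒜, A.Nonempty)
    (hcl : ∀ A ∈ 𝒜, IsClosed A)
    (hequiv : ∀ g : G, ∀ A ∈ 𝒜, g • A ∈ 𝒜)
    (hlf : ∀ K : Set X, IsCompact K → {A ∈ 𝒜 | (A ∩ K).Nonempty}.Finite) :
    (∀ A ∈ 𝒜, ∃ C : Set X, IsCompact C ∧ C ⊆ A ∧
        ⋃ g ∈ {g : G | g • A = A}, g • C = A) ∧
      ∃ 𝒜₀ ⊆ 𝒜, 𝒜₀.Finite ∧ ∀ A ∈ 𝒜, ∃ A₀ ∈ 𝒜₀, ∃ g : G, A = g • A₀ := by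
  obtain ⟨K, hK, hKcov⟩ := hcocpt
  have hfin := hlf K hK
  have hcptK : ∀ g : G, IsCompact (g • K) := by
    intro g
    have := hK.image (hiso g).continuous
    rwa [Set.image_smul] at this
  constructor
  · intro A hA
    set S : Set (Set X) := {B | B ∈ 𝒜 ∧ (B ∩ K).Nonempty ∧ ∃ g : G, g • B = A} with hSdef
    have hSfin : S.Finite := hfin.subset (fun B hB => ⟨hB.1, hB.2.1⟩)
    choose! gB hgB using fun (B : Set X) (hB : B ∈ S) => hB.2.2
    refine ⟨A ∩ ⋃ B ∈ S, (gB B) • K, ?_, Set.inter_subset_left, ?_⟩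
    · exact (hSfin.isCompact_biUnion (fun B _ => hcptK (gB B))).inter_left (hcl A hA)
    · apply Set.Subset.antisymm
      · intro x hx
        simp only [Set.mem_iUnion, Set.mem_setOf_eq] at hx
        obtain ⟨g, hg, c, hc, rfl⟩ := hx
        rw [← hg]
        exact Set.smul_mem_smul_set hc.1
      · intro a ha
        have hmem : a ∈ ⋃ g : G, g • K := hKcov ▸ Set.mem_univ a
        obtain ⟨g, hg⟩ := Set.mem_iUnion.mp hmem
        rw [Set.mem_smul_set_iff_inv_smul_mem] at hg
        have hBS : (g⁻¹ • A) ∈ S :=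
          ⟨hequiv g⁻¹ A hA, ⟨g⁻¹ • a, Set.smul_mem_smul_set ha, hg⟩, g, smul_inv_smul g A⟩
        set h := gB (g⁻¹ • A) with hh
        have hhB : h • (g⁻¹ • A) = A := hgB _ hBS
        have hkA : (h * g⁻¹) • A = A := by rw [mul_smul]; exact hhB
        have hka : (h * g⁻¹) • a ∈ A ∩ ⋃ B ∈ S, (gB B) • K := by
          constructor
          · rw [← hkA]; exact Set.smul_mem_smul_set ha
          · refine Set.mem_biUnion hBS ?_
            rw [mul_smul]
            exact Set.smul_mem_smul_set hg
        simp only [Set.mem_iUnion, Set.mem_setOf_eq]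
        refine ⟨(h * g⁻¹)⁻¹, ?_, (h * g⁻¹) • a, hka, inv_smul_smul _ _⟩
        rw [inv_smul_eq_iff]
        exact hkA.symm
  · refine ⟨{B | B ∈ 𝒜 ∧ (B ∩ K).Nonempty}, fun B hB => hB.1, hfin, ?_⟩
    intro A hA
    obtain ⟨a, ha⟩ := hne A hA
    have hmem : a ∈ ⋃ g : G, g • K := hKcov ▸ Set.mem_univ a
    obtain ⟨g, hg⟩ := Set.mem_iUnion.mp hmem
    rw [Set.mem_smul_set_iff_inv_smul_mem] at hg
    exact ⟨g⁻¹ • A, ⟨hequiv g⁻¹ A hA, ⟨g⁻¹ • a, Set.smul_mem_smul_set ha, hg⟩⟩,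
      g, (smul_inv_smul g A).symm⟩
end

section
/- Let M be a compact, connected, locally connected, metrizable topological space, and let ρ ∈ M be a point that is not a global cut point, i.e., M \ {ρ} is connected. Then every nonempty compact subset C₀ of M \ {ρ} is contained in a compact connected set C with C₀ ⊆ C ⊆ M \ {ρ}. -/
/-- In a compact, connected, locally connected, metrizable space `M`, if `ρ` is not a
global cut point (i.e. `M \ {ρ}` is connected), then every nonempty compact subset of
`M \ {ρ}` is contained in a compact connected subset of `M \ {ρ}`. -/
theorem compact_connected_enlargement {M : Type*} [TopologicalSpace M]
    [CompactSpace M] [ConnectedSpace M] [LocallyConnectedSpace M]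
    [TopologicalSpace.MetrizableSpace M]
    (ρ : M) (hρ : IsConnected ({ρ}ᶜ : Set M))
    (C₀ : Set M) (hC₀ne : C₀.Nonempty) (hC₀cpt : IsCompact C₀)
    (hC₀ : C₀ ⊆ ({ρ}ᶜ : Set M)) :
    ∃ C : Set M, IsCompact C ∧ IsConnected C ∧ C₀ ⊆ C ∧ C ⊆ ({ρ}ᶜ : Set M) := by
  classical
  letI : MetricSpace M := TopologicalSpace.metrizableSpaceMetric M
  set U : Set M := ({ρ}ᶜ : Set M) with hUdef
  have hUopen : IsOpen U := isOpen_compl_singleton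
  -- Step 1: good neighborhoods
  have key : ∀ x ∈ U, ∃ G : Set M, IsOpen G ∧ x ∈ G ∧ IsPreconnected G ∧ closure G ⊆ U := by
    intro x hx
    obtain ⟨V, hVmem, hVclosed, hVU⟩ := exists_mem_nhds_isClosed_subset (hUopen.mem_nhds hx)
    refine ⟨connectedComponentIn (interior V) x, isOpen_interior.connectedComponentIn,
      mem_connectedComponentIn (mem_interior_iff_mem_nhds.mpr hVmem),
      isPreconnected_connectedComponentIn, ?_⟩
    calc closure (connectedComponentIn (interior V) x)
        ⊆ closure V := closure_mono ((connectedComponentIn_subset _ _).trans interior_subset)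
      _ = V := hVclosed.closure_eq
      _ ⊆ U := hVU
  choose G hGopen hGmem hGconn hGcl using key
  obtain ⟨x₀, hx₀⟩ := hC₀ne
  have hx₀U : x₀ ∈ U := hC₀ hx₀
  -- T : points joined to x₀ by a compact connected subset of U
  set T : Set M := {y | ∃ K : Set M, IsCompact K ∧ IsPreconnected K ∧ K ⊆ U ∧ x₀ ∈ K ∧ y ∈ K}
    with hTdef
  have hx₀T : x₀ ∈ T :=
    ⟨{x₀}, isCompact_singleton, isPreconnected_singleton, by simpa using hx₀U, rfl, rfl⟩
  -- The union trick
  have hTU : U ⊆ T := by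
    by_contra hcon
    obtain ⟨y₀, hy₀U, hy₀T⟩ := Set.not_subset.1 hcon
    set V₁ : Set M := ⋃ (y : M) (hy : y ∈ U ∩ T), G y hy.1 with hV₁def
    set V₂ : Set M := ⋃ (y : M) (hy : y ∈ U \ T), G y hy.1 with hV₂def
    have hV₁open : IsOpen V₁ := isOpen_iUnion fun y => isOpen_iUnion fun hy => hGopen y hy.1
    have hV₂open : IsOpen V₂ := isOpen_iUnion fun y => isOpen_iUnion fun hy => hGopen y hy.1
    have hsub : U ⊆ V₁ ∪ V₂ := by
      intro z hz
      by_cases hzT : z ∈ T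
      · exact Or.inl (Set.mem_iUnion.2 ⟨z, Set.mem_iUnion.2 ⟨⟨hz, hzT⟩, hGmem z hz⟩⟩)
      · exact Or.inr (Set.mem_iUnion.2 ⟨z, Set.mem_iUnion.2 ⟨⟨hz, hzT⟩, hGmem z hz⟩⟩)
    have h1 : (U ∩ V₁).Nonempty :=
      ⟨x₀, hx₀U, Set.mem_iUnion.2 ⟨x₀, Set.mem_iUnion.2 ⟨⟨hx₀U, hx₀T⟩, hGmem x₀ hx₀U⟩⟩⟩
    have h2 : (U ∩ V₂).Nonempty :=
      ⟨y₀, hy₀U, Set.mem_iUnion.2 ⟨y₀, Set.mem_iUnion.2 ⟨⟨hy₀U, hy₀T⟩, hGmem y₀ hy₀U⟩⟩⟩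
    obtain ⟨z, hzU, hzV₁, hzV₂⟩ := hρ.isPreconnected V₁ V₂ hV₁open hV₂open hsub h1 h2
    obtain ⟨y₁, hy₁⟩ := Set.mem_iUnion.1 hzV₁
    obtain ⟨hy₁UT, hzG₁⟩ := Set.mem_iUnion.1 hy₁
    obtain ⟨y₂, hy₂⟩ := Set.mem_iUnion.1 hzV₂
    obtain ⟨hy₂UT, hzG₂⟩ := Set.mem_iUnion.1 hy₂
    obtain ⟨K, hKcpt, hKconn, hKU, hKx₀, hKy₁⟩ := hy₁UT.2
    have hy₂T : y₂ ∈ T := by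
      refine ⟨(K ∪ closure (G y₁ hy₁UT.1)) ∪ closure (G y₂ hy₂UT.1), ?_, ?_, ?_, ?_, ?_⟩
      · exact (hKcpt.union isClosed_closure.isCompact).union isClosed_closure.isCompact
      · refine IsPreconnected.union z ?_ (subset_closure hzG₂) ?_
          ((hGconn y₂ hy₂UT.1).closure)
        · exact Or.inr (subset_closure hzG₁)
        · exact (hKconn.union y₁ hKy₁ (subset_closure (hGmem y₁ hy₁UT.1))
            ((hGconn y₁ hy₁UT.1).closure))
      · exact Set.union_subset (Set.union_subset hKU (hGcl y₁ hy₁UT.1)) (hGcl y₂ hy₂UT.1)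
      · exact Or.inl (Or.inl hKx₀)
      · exact Or.inr (subset_closure (hGmem y₂ hy₂UT.1))
    exact hy₂UT.2 hy₂T
  -- Step 3: finite subcover of C₀
  choose K hKcpt hKconn hKU hKx₀ hKmem using fun (y : C₀) => hTU (hC₀ y.2)
  have hcover : C₀ ⊆ ⋃ y : C₀, G y.1 (hC₀ y.2) := fun z hz =>
    Set.mem_iUnion.2 ⟨⟨z, hz⟩, hGmem z (hC₀ hz)⟩
  obtain ⟨t, ht⟩ := hC₀cpt.elim_finite_subcover (fun y : C₀ => G y.1 (hC₀ y.2))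
    (fun y => hGopen y.1 (hC₀ y.2)) hcover
  refine ⟨({x₀} : Set M) ∪ ⋃ y ∈ t, (K y ∪ closure (G y.1 (hC₀ y.2))), ?_, ?_, ?_, ?_⟩
  · exact isCompact_singleton.union
      (t.finite_toSet.isCompact_biUnion fun y _ =>
        (hKcpt y).union isClosed_closure.isCompact)
  · constructor
    · exact ⟨x₀, Or.inl rfl⟩
    · have : ({x₀} : Set M) ∪ ⋃ y ∈ t, (K y ∪ closure (G y.1 (hC₀ y.2))) =
          ⋃₀ (insert ({x₀} : Set M)
            ((fun y : C₀ => K y ∪ closure (G y.1 (hC₀ y.2))) '' (t : Set C₀))) := by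
        rw [Set.sUnion_insert, Set.sUnion_image]
        simp
      rw [this]
      refine isPreconnected_sUnion x₀ _ ?_ ?_
      · rintro s (rfl | ⟨y, hy, rfl⟩)
        · exact rfl
        · exact Or.inl (hKx₀ y)
      · rintro s (rfl | ⟨y, hy, rfl⟩)
        · exact isPreconnected_singleton
        · exact (hKconn y).union y.1 (hKmem y) (subset_closure (hGmem y.1 (hC₀ y.2)))
            ((hGconn y.1 (hC₀ y.2)).closure)
  · intro z hz
    obtain ⟨y, hyi⟩ := Set.mem_iUnion.1 (ht hz)
    obtain ⟨hyt, hzG⟩ := Set.mem_iUnion.1 hyi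
    exact Or.inr (Set.mem_biUnion hyt (Or.inr (subset_closure hzG)))
  · rw [hUdef] at *
    refine Set.union_subset ?_ ?_
    · exact Set.singleton_subset_iff.2 hx₀U
    · exact Set.iUnion₂_subset fun y hy =>
        Set.union_subset (hKU y) (hGcl y.1 (hC₀ y.2))
end

section
/- Let (X_α) be an inverse system of nonempty compact Hausdorff topological spaces indexed by a directed partially ordered set, with continuous bonding maps f_{αβ} : X_β → X_α for α ≤ β satisfying f_{αβ} ∘ f_{βγ} = f_{αγ} whenever α ≤ β ≤ γ. Suppose each bonding map is monotone, i.e., surjective with every point preimage compact and connected, and suppose each factor space X_α is locally connected. Then the inverse limit lim← X_α (the subspace of the product Π X_α consisting of compatible threads) is locally connected. -/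
/-!
Basic neighbourhoods of a thread `x` are preimages `π_i⁻¹ U` of open sets `U ∋ x_i`, and local
connectedness of `X_i` lets us take `U` connected. It remains to see that `π_i⁻¹ U` is connected.
By compactness `π_i` is a closed surjection, and a closed surjection with connected fibres pulls
connected sets back to connected sets. A fibre `π_i⁻¹ {y}` is compact and its image under every
`π_l` is connected (a continuous image of a fibre of some `f_{im}`); were it split by two closed
sets, compactness would give a pair of points, one in each piece, with equal coordinates
everywhere, i.e. a common point.
-/

open Set Filter Topology

theorem IsPreconnected.preimage_of_isClosedMap_of_isPreconnected_fiber {α β : Type*}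
    [TopologicalSpace α] [TopologicalSpace β] {s : Set β} (hs : IsPreconnected s) {f : α → β}
    (hf : IsClosedMap f) (hsf : s ⊆ range f) (hfib : ∀ t ∈ s, IsPreconnected (f ⁻¹' {t})) :
    IsPreconnected (f ⁻¹' s) := by
  refine isPreconnected_closed_iff.2 fun u v hu hv hsuv hsu hsv => ?_
  have hcover : s ⊆ f '' u ∪ f '' v := by
    intro t ht
    obtain ⟨a, rfl⟩ := hsf ht
    exact (hsuv ht).imp (mem_image_of_mem f) (mem_image_of_mem f)
  obtain ⟨t, hts, ⟨a, hau, hat⟩, ⟨b, hbv, hbt⟩⟩ :=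
    isPreconnected_closed_iff.1 hs _ _ (hf u hu) (hf v hv) hcover
      (by simpa only [image_preimage_inter] using hsu.image f)
      (by simpa only [image_preimage_inter] using hsv.image f)
  have hfib_sub : f ⁻¹' {t} ⊆ f ⁻¹' s := preimage_mono (singleton_subset_iff.2 hts)
  obtain ⟨c, hct, hcuv⟩ := isPreconnected_closed_iff.1 (hfib t hts) u v hu hv
    (hfib_sub.trans hsuv) ⟨a, hat, hau⟩ ⟨b, hbt, hbv⟩
  exact ⟨c, hfib_sub hct, hcuv⟩

/-- If `A ∪ B` covers `F` with `A`, `B` closed, then for each `l` the images `π l '' A` and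
`π l '' B` meet, and by compactness a single pair `(a, b) ∈ A × B` works for every `l`. -/
theorem IsCompact.isPreconnected_of_isPreconnected_image {Y L : Type*} [TopologicalSpace Y]
    [Preorder L] [IsDirected L (· ≤ ·)] [Nonempty L] {Z : L → Type*}
    [∀ l, TopologicalSpace (Z l)] [∀ l, T2Space (Z l)] {π : ∀ l, Y → Z l}
    (hπ : ∀ l, Continuous (π l)) (hfactor : ∀ a b, a ≤ b → ∀ p q, π b p = π b q → π a p = π a q)
    (hsep : ∀ p q, (∀ l, π l p = π l q) → p = q) {F : Set Y} (hF : IsCompact F)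
    (himage : ∀ l, IsPreconnected (π l '' F)) : IsPreconnected F := by
  refine isPreconnected_closed_iff.2 fun t u ht hu hcover hFt hFu => ?_
  have hA : IsCompact (F ∩ t) := hF.inter_right ht
  have hB : IsCompact (F ∩ u) := hF.inter_right hu
  have hmeet : ∀ l, ∃ p ∈ (F ∩ t) ×ˢ (F ∩ u), π l p.1 = π l p.2 := by
    intro l
    obtain ⟨a, haF, hat⟩ := hFt
    obtain ⟨b, hbF, hbu⟩ := hFu
    obtain ⟨-, -, ⟨a', ha', rfl⟩, ⟨b', hb', hba⟩⟩ := isPreconnected_closed_iff.1 (himage l) _ _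
      (hA.image (hπ l)).isClosed (hB.image (hπ l)).isClosed
      (by rw [← image_union, ← inter_union_distrib_left, inter_eq_left.2 hcover])
      ⟨π l a, mem_image_of_mem _ haF, mem_image_of_mem _ ⟨haF, hat⟩⟩
      ⟨π l b, mem_image_of_mem _ hbF, mem_image_of_mem _ ⟨hbF, hbu⟩⟩
    exact ⟨(a', b'), ⟨ha', hb'⟩, hba.symm⟩
  have hclosed : ∀ l, IsClosed {p : Y × Y | π l p.1 = π l p.2} := fun l =>
    isClosed_eq ((hπ l).comp continuous_fst) ((hπ l).comp continuous_snd)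
  obtain ⟨⟨a, b⟩, ⟨⟨haF, hat⟩, -, hbu⟩, hab⟩ := (hA.prod hB).inter_iInter_nonempty _ hclosed
    fun s => by
      obtain ⟨l, hl⟩ := s.exists_le
      obtain ⟨p, hp, hpl⟩ := hmeet l
      exact ⟨p, hp, mem_iInter₂.2 fun k hk => hfactor k l (hl k hk) _ _ hpl⟩
  obtain rfl : a = b := hsep a b (mem_iInter.1 hab)
  exact ⟨a, haF, hat, hbu⟩

section InverseLimit

variable {ι : Type*} [Preorder ι] {X : ι → Type*}

def inverseLimit (f : ∀ i j, i ≤ j → X j → X i) : Set (∀ i, X i) :=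
  {x | ∀ i j (h : i ≤ j), f i j h (x j) = x i}

def inverseLimit.proj (f : ∀ i j, i ≤ j → X j → X i) (i : ι) (x : inverseLimit f) : X i :=
  (x : ∀ i, X i) i

namespace inverseLimit

variable {f : ∀ i j, i ≤ j → X j → X i}

theorem comp_proj {i j : ι} (h : i ≤ j) : f i j h ∘ proj f j = proj f i :=
  funext fun x => x.2 i j h

theorem image_proj_preimage {i j : ι} (hsurj : Function.Surjective (proj f j)) (h : i ≤ j)
    (s : Set (X i)) : proj f j '' (proj f i ⁻¹' s) = f i j h ⁻¹' s := by
  rw [← comp_proj h, preimage_comp, image_preimage_eq _ hsurj]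

variable [∀ i, TopologicalSpace (X i)]

theorem continuous_proj (i : ι) : Continuous (proj f i) :=
  (continuous_apply i).comp continuous_subtype_val

theorem isClosed_setOf_bond [∀ i, T2Space (X i)] (hcont : ∀ i j (h : i ≤ j), Continuous (f i j h))
    {i j : ι} (h : i ≤ j) : IsClosed {x : ∀ i, X i | f i j h (x j) = x i} :=
  isClosed_eq ((hcont i j h).comp (continuous_apply j)) (continuous_apply i)

theorem _root_.isClosed_inverseLimit [∀ i, T2Space (X i)]
    (hcont : ∀ i j (h : i ≤ j), Continuous (f i j h)) : IsClosed (inverseLimit f) := by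
  simp only [inverseLimit, ofPred_forall]
  exact isClosed_iInter fun i => isClosed_iInter fun j => isClosed_iInter fun h =>
    isClosed_setOf_bond hcont h

theorem proj_surjective [IsDirected ι (· ≤ ·)] [∀ i, CompactSpace (X i)] [∀ i, T2Space (X i)]
    (hcont : ∀ i j (h : i ≤ j), Continuous (f i j h))
    (hcomp : ∀ i j k (hij : i ≤ j) (hjk : j ≤ k) (x : X k),
      f i j hij (f j k hjk x) = f i k (hij.trans hjk) x)
    (hsurj : ∀ i j (h : i ≤ j), Function.Surjective (f i j h)) (j : ι) :
    Function.Surjective (proj f j) := by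
  classical
  intro z
  have : Nonempty ι := ⟨j⟩
  have hne : ∀ k, Nonempty (X k) := fun k =>
    let ⟨m, hkm, hjm⟩ := directed_of (· ≤ ·) k j
    ⟨f k m hkm (hsurj j m hjm z).choose⟩
  let M : ι → Set (∀ i, X i) := fun l =>
    {x | (∀ a b (h : a ≤ b), b ≤ l → f a b h (x b) = x a) ∧ x j = z}
  have hM_closed : ∀ l, IsClosed (M l) := by
    intro l
    simp only [M, ofPred_and, ofPred_forall]
    exact (isClosed_iInter fun a => isClosed_iInter fun b => isClosed_iInter fun h =>
      isClosed_iInter fun _ => isClosed_setOf_bond hcont h).inter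
      (isClosed_eq (continuous_apply j) continuous_const)
  have hM_anti : Antitone M := fun l l' hll' x hx =>
    ⟨fun a b h hb => hx.1 a b h (hb.trans hll'), hx.2⟩
  have hM_ne : ∀ l, (M l).Nonempty := by
    intro l
    obtain ⟨m, hlm, hjm⟩ := directed_of (· ≤ ·) l j
    obtain ⟨w, rfl⟩ := hsurj j m hjm z
    refine ⟨fun k => if h : k ≤ m then f k m h w else (hne k).some, fun a b hab hb => ?_, ?_⟩
    · simp only [dif_pos (hb.trans hlm), dif_pos (hab.trans (hb.trans hlm)), hcomp]
    · simp only [dif_pos hjm]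
  obtain ⟨x, hx⟩ := IsCompact.nonempty_iInter_of_directed_nonempty_isCompact_isClosed M
    hM_anti.directed_ge hM_ne (fun l => (hM_closed l).isCompact) hM_closed
  rw [mem_iInter] at hx
  exact ⟨⟨x, fun a b h => (hx b).1 a b h le_rfl⟩, (hx j).2⟩

theorem _root_.compactSpace_inverseLimit [∀ i, CompactSpace (X i)] [∀ i, T2Space (X i)]
    (hcont : ∀ i j (h : i ≤ j), Continuous (f i j h)) : CompactSpace (inverseLimit f) :=
  isCompact_iff_compactSpace.1 (isClosed_inverseLimit hcont).isCompact

theorem isPreconnected_proj_preimage_singleton [IsDirected ι (· ≤ ·)] [∀ i, CompactSpace (X i)]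
    [∀ i, T2Space (X i)] (hcont : ∀ i j (h : i ≤ j), Continuous (f i j h))
    (hcomp : ∀ i j k (hij : i ≤ j) (hjk : j ≤ k) (x : X k),
      f i j hij (f j k hjk x) = f i k (hij.trans hjk) x)
    (hsurj : ∀ i j (h : i ≤ j), Function.Surjective (f i j h)) {i : ι} {x : X i}
    (hfib : ∀ j (h : i ≤ j), IsPreconnected (f i j h ⁻¹' {x})) :
    IsPreconnected (proj f i ⁻¹' {x}) := by
  have : Nonempty ι := ⟨i⟩
  have := compactSpace_inverseLimit hcont
  refine (isClosed_singleton.preimage (continuous_proj i)).isCompact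
    |>.isPreconnected_of_isPreconnected_image continuous_proj ?_ ?_ fun l => ?_
  · intro a b hab p q hpq
    rw [← comp_proj hab]
    exact congrArg (f a b hab) hpq
  · exact fun p q hpq => Subtype.ext (funext hpq)
  · obtain ⟨m, hlm, him⟩ := directed_of (· ≤ ·) l i
    rw [← comp_proj hlm, image_comp, image_proj_preimage (proj_surjective hcont hcomp hsurj m) him]
    exact (hfib m him).image _ (hcont l m hlm).continuousOn

theorem isPreconnected_proj_preimage [IsDirected ι (· ≤ ·)] [∀ i, CompactSpace (X i)]
    [∀ i, T2Space (X i)] (hcont : ∀ i j (h : i ≤ j), Continuous (f i j h))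
    (hcomp : ∀ i j k (hij : i ≤ j) (hjk : j ≤ k) (x : X k),
      f i j hij (f j k hjk x) = f i k (hij.trans hjk) x)
    (hsurj : ∀ i j (h : i ≤ j), Function.Surjective (f i j h))
    (hfib : ∀ i j (h : i ≤ j) (x : X i), IsPreconnected (f i j h ⁻¹' {x}))
    {i : ι} {s : Set (X i)} (hs : IsPreconnected s) : IsPreconnected (proj f i ⁻¹' s) := by
  have := compactSpace_inverseLimit hcont
  refine hs.preimage_of_isClosedMap_of_isPreconnected_fiber (continuous_proj i).isClosedMap ?_
    fun x _ => isPreconnected_proj_preimage_singleton hcont hcomp hsurj (hfib i · · x)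
  rw [(proj_surjective hcont hcomp hsurj i).range_eq]
  exact subset_univ s

theorem nhds_eq_iInf_comap_proj (x : inverseLimit f) :
    𝓝 x = ⨅ i, comap (proj f i) (𝓝 (proj f i x)) := by
  rw [nhds_subtype, nhds_pi, Filter.pi, comap_iInf]
  simp only [comap_comap]
  rfl

theorem exists_isOpen_proj_preimage_subset [IsDirected ι (· ≤ ·)] [Nonempty ι]
    (hcont : ∀ i j (h : i ≤ j), Continuous (f i j h)) {x : inverseLimit f}
    {W : Set (inverseLimit f)} (hW : W ∈ 𝓝 x) :
    ∃ i, ∃ U : Set (X i), IsOpen U ∧ proj f i x ∈ U ∧ proj f i ⁻¹' U ⊆ W := by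
  have hanti : Antitone fun i => comap (proj f i) (𝓝 (proj f i x)) := by
    intro i j hij
    dsimp only
    rw [← comp_proj hij, ← comap_comap]
    exact comap_mono ((hcont i j hij).tendsto _).le_comap
  rw [nhds_eq_iInf_comap_proj, mem_iInf_of_directed hanti.directed_ge] at hW
  obtain ⟨i, t, ht, hsub⟩ := hW
  obtain ⟨U, hUt, hU, hxU⟩ := mem_nhds_iff.1 ht
  exact ⟨i, U, hU, hxU, (preimage_mono hUt).trans hsub⟩

end inverseLimit

end InverseLimit

theorem inverseLimit_locallyConnected_general {ι : Type*} [PartialOrder ι]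
    [IsDirected ι (· ≤ ·)]
    (X : ι → Type*) [∀ i, TopologicalSpace (X i)] [∀ i, CompactSpace (X i)]
    [∀ i, T2Space (X i)] [∀ i, LocallyConnectedSpace (X i)]
    (f : ∀ i j, i ≤ j → X j → X i)
    (hcont : ∀ i j (h : i ≤ j), Continuous (f i j h))
    (hcomp : ∀ i j k (hij : i ≤ j) (hjk : j ≤ k) (x : X k),
      f i j hij (f j k hjk x) = f i k (hij.trans hjk) x)
    (hsurj : ∀ i j (h : i ≤ j), Function.Surjective (f i j h))
    (hfib : ∀ i j (h : i ≤ j) (y : X i),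
      IsCompact (f i j h ⁻¹' {y}) ∧ IsConnected (f i j h ⁻¹' {y})) :
    LocallyConnectedSpace
      {x : ∀ i, X i // ∀ i j (h : i ≤ j), f i j h (x j) = x i} := by
  show LocallyConnectedSpace (inverseLimit f)
  rcases isEmpty_or_nonempty ι with _ | _
  · have : Subsingleton (inverseLimit f) := ⟨fun a b => Subtype.ext (funext isEmptyElim)⟩
    infer_instance
  refine locallyConnectedSpace_iff_subsets_isOpen_isConnected.2 fun x W hW => ?_
  obtain ⟨i, U, hU, hxU, hUW⟩ := inverseLimit.exists_isOpen_proj_preimage_subset hcont hW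
  obtain ⟨V, hVU, hV, hxV, hVconn⟩ :=
    locallyConnectedSpace_iff_subsets_isOpen_isConnected.1 inferInstance _ U (hU.mem_nhds hxU)
  have hfib' i j h y : IsPreconnected (f i j h ⁻¹' {y}) := (hfib i j h y).2.isPreconnected
  exact ⟨inverseLimit.proj f i ⁻¹' V, (preimage_mono hVU).trans hUW,
    hV.preimage (inverseLimit.continuous_proj i), hxV, ⟨x, hxV⟩,
    inverseLimit.isPreconnected_proj_preimage hcont hcomp hsurj hfib' hVconn.isPreconnected⟩

/-- Capel's theorem: the inverse limit of an inverse system of nonempty compact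
Hausdorff locally connected spaces over a directed partially ordered set, with
monotone (surjective with compact connected point preimages) continuous bonding maps,
is locally connected. -/
theorem inverseLimit_locallyConnected {ι : Type*} [PartialOrder ι]
    [IsDirected ι (· ≤ ·)]
    (X : ι → Type*) [∀ i, TopologicalSpace (X i)] [∀ i, CompactSpace (X i)]
    [∀ i, T2Space (X i)] [∀ i, Nonempty (X i)] [∀ i, LocallyConnectedSpace (X i)]
    (f : ∀ i j, i ≤ j → X j → X i)
    (hcont : ∀ i j (h : i ≤ j), Continuous (f i j h))
    (hid : ∀ i (x : X i), f i i le_rfl x = x)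
    (hcomp : ∀ i j k (hij : i ≤ j) (hjk : j ≤ k) (x : X k),
      f i j hij (f j k hjk x) = f i k (hij.trans hjk) x)
    (hsurj : ∀ i j (h : i ≤ j), Function.Surjective (f i j h))
    (hfib : ∀ i j (h : i ≤ j) (y : X i),
      IsCompact (f i j h ⁻¹' {y}) ∧ IsConnected (f i j h ⁻¹' {y})) :
    LocallyConnectedSpace
      {x : ∀ i, X i // ∀ i j (h : i ≤ j), f i j h (x j) = x i} :=
  inverseLimit_locallyConnected_general X f hcont hcomp hsurj hfib
end
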